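/- Let z : ℕ → ℂ with z n ≠ 0 for all n and sup_n (n+1)·|z n| < ∞, and let θ : ℕ → ℝ be bounded with z n = |z n| · exp(i·θ n) for all n (a bounded choice of arguments). Then the function g(b, u, s) := Σ'_{n ∈ ℕ} b n · exp(s·(log|z n| + i·θ n)) · (1 + u n)^s, where (1 + u n)^s is the principal-branch power (well defined since ‖u‖ < 1 forces Re(1 + u n) > 0), is analytic on the open set {(b, u, s) ∈ ℓ∞ × ℓ∞ × ℂ : ‖u‖ < 1 and Re s > 1}. -/

import Mathlib

/-
Write `c n = log ‖z n‖ + i θ n`. Near any `s₀` with `Re s₀ > 1` the bounds `‖z n‖ ≤ M / (n + 1)`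
and `|θ n| ≤ Θ` give `‖exp (s c n)‖ ≤ C (n + 1)^(-a)` for some `a > 1`, uniformly in `s`, so
`s ↦ (exp (s c n))ₙ` is holomorphic with values in `ℓ¹`. On the other side,
`(b, u, s) ↦ b · exp (s · log (1 + u))` is analytic with values in the Banach algebra `ℓ∞`,
`log (1 + u)` being given by the Mercator series on `‖u‖ < 1`; coordinatewise it is
`b n (1 + u n)^s`. The series is the `ℓ¹`–`ℓ∞` pairing of these two analytic maps.
-/

open scoped ENNReal
open Complex Filter Topology FormalMultilinearSeries

noncomputable section

namespace lp

section InftyEval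

variable {I 𝕜 : Type*} {B : I → Type*} [NormedField 𝕜] [∀ i, NormedRing (B i)]
  [∀ i, NormOneClass (B i)] [∀ i, NormedAlgebra 𝕜 (B i)]

variable (𝕜 B) in
def inftyEvalAlgHom (i : I) : lp B ∞ →ₐ[𝕜] B i :=
  (Pi.evalAlgHom 𝕜 B i).comp (lpInftySubalgebra 𝕜 B).val

@[simp]
lemma inftyEvalAlgHom_apply (i : I) (f : lp B ∞) : inftyEvalAlgHom 𝕜 B i f = f i := rfl

lemma continuous_inftyEvalAlgHom (i : I) : Continuous (inftyEvalAlgHom 𝕜 B i) :=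
  (lipschitzWith_one_eval ∞ i).continuous

end InftyEval

lemma tsum_single_apply {α : Type*} {E : α → Type*} [∀ i, NormedAddCommGroup (E i)]
    [DecidableEq α] {p : ℝ≥0∞} [Fact (1 ≤ p)] (hp : p ≠ ∞) {f : ∀ i, E i} (hf : Memℓp f p)
    (i : α) : (∑' j, lp.single p j (f j)) i = f i := by
  rw [(lp.hasSum_single hp ⟨f, hf⟩).tsum_eq]

lemma analyticOnNhd_tsum_single_one {ι E : Type*} [DecidableEq ι] [NormedAddCommGroup E]
    [NormedSpace ℂ E] [CompleteSpace E] {F : ι → ℂ → E} {U : Set ℂ} (hU : IsOpen U)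
    (hF : ∀ i, DifferentiableOn ℂ (F i) U) {u : ι → ℝ} (hu : Summable u)
    (hFu : ∀ i, ∀ s ∈ U, ‖F i s‖ ≤ u i) :
    AnalyticOnNhd ℂ (fun s ↦ ∑' i, lp.single 1 i (F i s) : ℂ → lp (fun _ : ι ↦ E) 1) U := by
  refine fun s hs ↦ DifferentiableOn.analyticAt ?_ (hU.mem_nhds hs)
  refine differentiableOn_tsum_of_summable_norm hu (fun i ↦ ?_) hU fun i s hs ↦ ?_
  · exact (lp.singleContinuousLinearMap ℂ (fun _ : ι ↦ E) 1 i).differentiable.comp_differentiableOn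
      (hF i)
  · rw [lp.norm_single one_pos]
    exact hFu i s hs

end lp

lemma AnalyticAt.tsum_mul_lp_one_lp_infty {ι X : Type*} [NormedAddCommGroup X]
    [NormedSpace ℂ X] {W : X → lp (fun _ : ι ↦ ℂ) 1} {V : X → lp (fun _ : ι ↦ ℂ) ∞} {x : X}
    (hW : AnalyticAt ℂ W x) (hV : AnalyticAt ℂ V x) :
    AnalyticAt ℂ (fun y ↦ ∑' i, W y i * V y i) x :=
  ((lp.dualPairing 1 ∞ (fun _ : ι ↦ ContinuousLinearMap.mul ℂ ℂ) (K := 1)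
    fun _ ↦ ContinuousLinearMap.opNorm_mul_le ℂ ℂ).analyticAt_bilinear _).comp₂ hW hV

section OfScalars

variable {𝕜 A B : Type*} [NontriviallyNormedField 𝕜] [NormedRing A] [NormedAlgebra 𝕜 A]
  [NormedRing B] [NormedAlgebra 𝕜 B]

lemma one_le_ofScalars_radius [NormOneClass A] {c : ℕ → 𝕜} (hc : ∀ n, ‖c n‖ ≤ 1) :
    1 ≤ (ofScalars A c).radius := by
  refine (ofScalars A c).le_radius_of_bound 1 fun n ↦ ?_
  simpa only [NNReal.coe_one, one_pow, mul_one, ofScalars_norm] using hc n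

lemma map_ofScalarsSum (f : A →ₐ[𝕜] B) (hf : Continuous f) (c : ℕ → 𝕜) {x : A}
    (hx : Summable fun n ↦ c n • x ^ n) : f (ofScalarsSum c x) = ofScalarsSum c (f x) := by
  simp only [ofScalars_sum_eq, ← (hx.hasSum.map f hf).tsum_eq, Function.comp_def, map_smul,
    map_pow]

end OfScalars

section LogOneAdd

def logOneAddCoeff (k : ℕ) : ℂ := (-1) ^ (k + 1) / k

lemma norm_logOneAddCoeff_le_one (k : ℕ) : ‖logOneAddCoeff k‖ ≤ 1 := by
  rcases k.eq_zero_or_pos with rfl | hk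
  · simp [logOneAddCoeff]
  · rw [logOneAddCoeff, norm_div, norm_pow, norm_neg, norm_one, one_pow, norm_natCast]
    exact div_le_one_of_le₀ (by exact_mod_cast hk) k.cast_nonneg

/-- `log (1 + x)` through its Mercator series; it is meaningful only for `‖x‖ < 1`. -/
def logOneAdd (A : Type*) [NormedRing A] [NormedAlgebra ℂ A] : A → A :=
  ofScalarsSum logOneAddCoeff

lemma logOneAdd_complex {w : ℂ} (hw : ‖w‖ < 1) : logOneAdd ℂ w = log (1 + w) := by
  rw [logOneAdd, ofScalars_sum_eq]
  refine (hasSum_taylorSeries_log hw).tsum_eq ▸ tsum_congr fun n ↦ ?_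
  rw [logOneAddCoeff, smul_eq_mul]
  ring

variable {A : Type*} [NormedRing A] [NormedAlgebra ℂ A] [NormOneClass A]

lemma mem_eball_radius_logOneAdd {x : A} (hx : ‖x‖ < 1) :
    x ∈ Metric.eball 0 (ofScalars A logOneAddCoeff).radius := by
  refine Metric.mem_eball.2 (lt_of_lt_of_le ?_ (one_le_ofScalars_radius norm_logOneAddCoeff_le_one))
  rw [edist_zero_right, ← ofReal_norm, ← ENNReal.ofReal_one]
  exact ENNReal.ofReal_lt_ofReal_iff'.2 ⟨hx, one_pos⟩

variable [CompleteSpace A]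

lemma analyticAt_logOneAdd {x : A} (hx : ‖x‖ < 1) : AnalyticAt ℂ (logOneAdd A) x :=
  ((ofScalars A logOneAddCoeff).hasFPowerSeriesOnBall
    (one_pos.trans_le (one_le_ofScalars_radius norm_logOneAddCoeff_le_one))).analyticAt_of_mem
    (mem_eball_radius_logOneAdd hx)

lemma map_logOneAdd {B : Type*} [NormedRing B] [NormedAlgebra ℂ B] (f : A →ₐ[ℂ] B)
    (hf : Continuous f) {x : A} (hx : ‖x‖ < 1) : f (logOneAdd A x) = logOneAdd B (f x) := by
  refine map_ofScalarsSum f hf _ ?_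
  simpa only [ofScalars_apply_eq] using (ofScalars A logOneAddCoeff).summable
    (mem_eball_radius_logOneAdd hx)

lemma analyticAt_mul_exp_smul_logOneAdd {p : A × A × ℂ} (hp : ‖p.2.1‖ < 1) :
    AnalyticAt ℂ (fun q : A × A × ℂ ↦ q.1 * NormedSpace.exp (q.2.2 • logOneAdd A q.2.1)) p := by
  have hlog := (analyticAt_logOneAdd hp).comp (f := fun q : A × A × ℂ ↦ q.2.1)
    (analyticAt_fst.comp analyticAt_snd)
  exact analyticAt_fst.mul ((NormedSpace.exp_analytic _).comp
    ((analyticAt_snd.comp analyticAt_snd).smul hlog))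

end LogOneAdd

lemma mul_exp_smul_logOneAdd_apply {I : Type*} (b u : lp (fun _ : I ↦ ℂ) ∞) (s : ℂ)
    (hu : ‖u‖ < 1) (n : I) :
    (b * NormedSpace.exp (s • logOneAdd _ u)) n = b n * (1 + u n) ^ s := by
  have hun : ‖u n‖ < 1 := (lp.norm_apply_le_norm ENNReal.top_ne_zero u n).trans_lt hu
  have hne : 1 + u n ≠ 0 := fun h ↦ by
    simp [eq_neg_of_add_eq_zero_right h] at hun
  have : Nonempty I := ⟨n⟩
  have hcont := lp.continuous_inftyEvalAlgHom (𝕜 := ℂ) (B := fun _ : I ↦ ℂ) n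
  rw [← lp.inftyEvalAlgHom_apply (𝕜 := ℂ), map_mul, NormedSpace.map_exp _ hcont, map_smul,
    map_logOneAdd _ hcont hu]
  simp only [lp.inftyEvalAlgHom_apply, logOneAdd_complex hun, smul_eq_mul, cpow_def_of_ne_zero hne,
    mul_comm s, ← exp_eq_exp_ℂ]

lemma norm_cexp_mul_log_add_I_mul {x : ℝ} (hx : 0 < x) (θ : ℝ) (s : ℂ) :
    ‖cexp (s * (Real.log x + I * θ))‖ = x ^ s.re * Real.exp (-(s.im * θ)) := by
  rw [norm_exp, Real.rpow_def_of_pos hx, ← Real.exp_add]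
  congr 1
  simp only [mul_re, add_re, ofReal_re, mul_im, I_re, I_im, ofReal_im, add_im]
  ring

lemma rpow_le_rpow_mul_rpow_neg {x K m a σ A : ℝ} (hx : 0 < x) (hK : 1 ≤ K) (hm : 1 ≤ m)
    (hxK : m * x ≤ K) (ha : 0 ≤ a) (haσ : a ≤ σ) (hσA : σ ≤ A) : x ^ σ ≤ K ^ A * m ^ (-a) :=
  calc x ^ σ ≤ (K / m) ^ σ :=
        Real.rpow_le_rpow hx.le ((le_div_iff₀' (by linarith)).2 hxK) (ha.trans haσ)
    _ = K ^ σ * m ^ (-σ) := by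
        rw [Real.div_rpow (by linarith) (by linarith), Real.rpow_neg (by linarith), div_eq_mul_inv]
    _ ≤ K ^ A * m ^ (-a) := by gcongr

lemma exists_summable_bound_norm_cexp {x θ : ℕ → ℝ} (hx : ∀ n, 0 < x n) {M Θ : ℝ}
    (hM : ∀ n : ℕ, ((n : ℝ) + 1) * x n ≤ M) (hΘ : ∀ n, |θ n| ≤ Θ) {s₀ : ℂ} (hs₀ : 1 < s₀.re) :
    ∃ u : ℕ → ℝ, Summable u ∧
      ∀ᶠ s in 𝓝 s₀, ∀ n, ‖cexp (s * (Real.log (x n) + I * θ n))‖ ≤ u n := by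
  obtain ⟨a, ha, has₀⟩ := exists_between hs₀
  have hΘ₀ : 0 ≤ Θ := (abs_nonneg _).trans (hΘ 0)
  have hsum : Summable fun n : ℕ ↦ ((n : ℝ) + 1) ^ (-a) := by
    simpa only [Nat.cast_add_one] using
      (summable_nat_add_iff 1).2 (Real.summable_nat_rpow.2 (neg_lt_neg ha))
  refine ⟨fun n ↦ max M 1 ^ (s₀.re + 1) * ((n : ℝ) + 1) ^ (-a) * Real.exp ((|s₀.im| + 1) * Θ),
    (hsum.mul_left _).mul_right _, ?_⟩
  have hre_lo : ∀ᶠ s in 𝓝 s₀, a < s.re := continuous_re.continuousAt.eventually_const_lt has₀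
  have hre_hi : ∀ᶠ s in 𝓝 s₀, s.re < s₀.re + 1 :=
    continuous_re.continuousAt.eventually_lt_const (lt_add_one _)
  have him : ∀ᶠ s in 𝓝 s₀, |s.im| < |s₀.im| + 1 :=
    (continuous_abs.comp continuous_im).continuousAt.eventually_lt_const (lt_add_one _)
  filter_upwards [hre_lo, hre_hi, him] with s hlo hhi him n
  rw [norm_cexp_mul_log_add_I_mul (hx n)]
  gcongr
  · exact rpow_le_rpow_mul_rpow_neg (hx n) (le_max_right _ _) (by simp) ((hM n).trans
      (le_max_left _ _)) (by linarith) hlo.le hhi.le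
  · calc -(s.im * θ n) ≤ |s.im| * |θ n| := by rw [← abs_mul]; exact neg_le_abs _
      _ ≤ (|s₀.im| + 1) * Θ := by gcongr; exact hΘ n

end

local notation "ℓ∞" => lp (fun _ : ℕ ↦ ℂ) ∞

theorem zeta_ER_continuation_locally_analytic_general
    (z : ℕ → ℂ) (hz : ∀ n, z n ≠ 0)
    (hbig : ∃ M : ℝ, ∀ n : ℕ, ((n : ℝ) + 1) * ‖z n‖ ≤ M)
    (θ : ℕ → ℝ) (hθ : ∃ Θ : ℝ, ∀ n : ℕ, |θ n| ≤ Θ) :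
    AnalyticOnNhd ℂ
      (fun p : lp (fun _ : ℕ => ℂ) ∞ × lp (fun _ : ℕ => ℂ) ∞ × ℂ =>
        ∑' n : ℕ, p.1 n *
          Complex.exp (p.2.2 * (Real.log (‖z n‖) + Complex.I * θ n)) *
          (1 + p.2.1 n) ^ p.2.2)
      {p : lp (fun _ : ℕ => ℂ) ∞ × lp (fun _ : ℕ => ℂ) ∞ × ℂ |
        ‖p.2.1‖ < 1 ∧ 1 < p.2.2.re} := by
  obtain ⟨M, hM⟩ := hbig
  obtain ⟨Θ, hΘ⟩ := hθ
  rintro ⟨b, u, s₀⟩ ⟨hu, hs₀⟩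
  obtain ⟨w, hw, hbound⟩ :=
    exists_summable_bound_norm_cexp (fun n ↦ norm_pos_iff.2 (hz n)) hM hΘ hs₀
  obtain ⟨U, hwU, hU, hs₀U⟩ := eventually_nhds_iff.1 hbound
  have hW := lp.analyticOnNhd_tsum_single_one hU (fun n ↦ by fun_prop) hw
    (fun n s hs ↦ hwU s hs n) s₀ hs₀U
  have hs : AnalyticAt ℂ (fun p : ℓ∞ × ℓ∞ × ℂ ↦ p.2.2) (b, u, s₀) :=
    analyticAt_snd.comp analyticAt_snd
  have hV := analyticAt_mul_exp_smul_logOneAdd (p := (b, u, s₀)) hu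
  refine ((hW.comp hs).tsum_mul_lp_one_lp_infty hV).congr ?_
  filter_upwards [(continuous_norm.comp (continuous_fst.comp continuous_snd)).continuousAt
      |>.eventually_lt_const hu, (continuous_snd.comp continuous_snd).continuousAt.preimage_mem_nhds
      (hU.mem_nhds hs₀U)] with ⟨b', u', s⟩ hu' hsU
  refine tsum_congr fun n ↦ ?_
  have hmem : Memℓp (fun n ↦ cexp (s * (Real.log ‖z n‖ + I * θ n))) 1 :=
    memℓp_gen (by simpa using hw.of_nonneg_of_le (fun _ ↦ norm_nonneg _) (hwU s hsU))
  simp only [Function.comp_apply, lp.tsum_single_apply ENNReal.one_ne_top hmem,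
    mul_exp_smul_logOneAdd_apply b' u' s hu']
  ring

/-- Local holomorphy of the analytic continuation of the Euler–Riemann zeta function
at a point `z` off the closure of the coordinate cross, with branch of `(z n)^s`
determined by a bounded choice of arguments `θ`: the function
`g(b, u, s) = ∑ b n · exp(s(log|z n| + iθ n)) · (1 + u n)^s` is analytic on
`{(b, u, s) : ‖u‖ < 1, Re s > 1}`. -/
theorem zeta_ER_continuation_locally_analytic
    (z : ℕ → ℂ) (hz : ∀ n, z n ≠ 0)
    (hbig : ∃ M : ℝ, ∀ n : ℕ, ((n : ℝ) + 1) * ‖z n‖ ≤ M)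
    (θ : ℕ → ℝ) (hθ : ∃ Θ : ℝ, ∀ n : ℕ, |θ n| ≤ Θ)
    (harg : ∀ n : ℕ, z n = (‖z n‖ : ℂ) * Complex.exp (Complex.I * θ n)) :
    AnalyticOnNhd ℂ
      (fun p : lp (fun _ : ℕ => ℂ) ∞ × lp (fun _ : ℕ => ℂ) ∞ × ℂ =>
        ∑' n : ℕ, p.1 n *
          Complex.exp (p.2.2 * (Real.log (‖z n‖) + Complex.I * θ n)) *
          (1 + p.2.1 n) ^ p.2.2)
      {p : lp (fun _ : ℕ => ℂ) ∞ × lp (fun _ : ℕ => ℂ) ∞ × ℂ |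
        ‖p.2.1‖ < 1 ∧ 1 < p.2.2.re} :=
  zeta_ER_continuation_locally_analytic_general z hz hbig θ hθ
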